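/- Let r, K, d_b, d_h, B* be positive reals with r > B* d_b, and define Q(H) = −d_h H³ + (r − B* d_b) H² − d_h K H − d_b K B*. If d_h < (r − B* d_b)·√(2(r − B* d_b)) / (3·√(K(r − B* d_b) + 3 d_b K B*)), then (r − B* d_b)² > 3 K d_h² (so that H₂^c = ((r − B* d_b) + √((r − B* d_b)² − 3 K d_h²))/(3 d_h) is well defined), the value at the inflection point satisfies Q((r − B* d_b)/(3 d_h)) = 2(r − B* d_b)³/(27 d_h²) − K(r − B* d_b)/3 − d_b K B* > 0, and consequently Q(H₂^c) > 0. -/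

import Mathlib

/-! Write `a = r - B* d_b`. Squared, the bound on `d_h` reads `9 d_h² (K a + 3 d_b K B*) < 2 a³`,
which is exactly the positivity of `Q` at its inflection point `a / (3 d_h)`, and which also forces
the discriminant `a² - 3 K d_h²` of `Q'` to be positive. With `s` its square root, the local maximum
`H₂^c = (a + s) / (3 d_h)` exceeds the inflection value by `2 s³ / (27 d_h²) ≥ 0`. -/

open Real

def cubic (d a K e H : ℝ) : ℝ := -d * H ^ 3 + a * H ^ 2 - d * K * H - e

section Cubic

variable {d a K e : ℝ}

theorem cubic_inflection (hd : d ≠ 0) :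
    cubic d a K e (a / (3 * d)) = 2 * a ^ 3 / (27 * d ^ 2) - K * a / 3 - e := by
  unfold cubic
  field_simp
  ring

theorem cubic_inflection_pos (hd : 0 < d) (h : 9 * d ^ 2 * (K * a + 3 * e) < 2 * a ^ 3) :
    0 < cubic d a K e (a / (3 * d)) := by
  have hval : 2 * a ^ 3 / (27 * d ^ 2) - K * a / 3 - e
      = (2 * a ^ 3 - 9 * d ^ 2 * (K * a + 3 * e)) / (27 * d ^ 2) := by
    field_simp
    ring
  rw [cubic_inflection hd.ne', hval]
  exact div_pos (by linarith) (by positivity)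

theorem cubic_local_max_eq {s : ℝ} (hd : d ≠ 0) (hs : s ^ 2 = a ^ 2 - 3 * K * d ^ 2) :
    cubic d a K e ((a + s) / (3 * d))
      = cubic d a K e (a / (3 * d)) + 2 * s ^ 3 / (27 * d ^ 2) := by
  unfold cubic
  field_simp
  linear_combination (-81 * s) * hs

end Cubic

theorem sq_mul_lt_of_lt_mul_sqrt_div_sqrt {x a c : ℝ} (ha : 0 < a) (hc : 0 < c) (hx : 0 ≤ x)
    (h : x < a * √(2 * a) / (3 * √c)) : 9 * x ^ 2 * c < 2 * a ^ 3 := by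
  have hsq : (a * √(2 * a) / (3 * √c)) ^ 2 = 2 * a ^ 3 / (9 * c) := by
    rw [div_pow, mul_pow, mul_pow, sq_sqrt (by positivity), sq_sqrt hc.le]
    ring
  have hx2 : x ^ 2 < 2 * a ^ 3 / (9 * c) := hsq ▸ pow_lt_pow_left₀ h hx two_ne_zero
  rw [lt_div_iff₀ (by positivity)] at hx2
  linarith

theorem three_mul_sq_lt_sq_of_sq_mul_lt {x a K c : ℝ} (ha : 0 < a) (hKc : K * a ≤ c)
    (h : 9 * x ^ 2 * c < 2 * a ^ 3) : 3 * K * x ^ 2 < a ^ 2 := by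
  have hKa : 3 * K * x ^ 2 * (3 * a) < 2 * a ^ 2 * a := by
    nlinarith [mul_le_mul_of_nonneg_left hKc (sq_nonneg x)]
  nlinarith

theorem cubic_local_max_positive_general (r K db dh Bs : ℝ)
    (hK : 0 < K) (hdb : 0 < db) (hdh : 0 < dh) (hBs : 0 < Bs)
    (hpos : Bs * db < r)
    (Q : ℝ → ℝ)
    (hQ : ∀ H, Q H = -dh * H ^ 3 + (r - Bs * db) * H ^ 2 - dh * K * H - db * K * Bs)
    (hdh2 : dh < (r - Bs * db) * Real.sqrt (2 * (r - Bs * db))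
        / (3 * Real.sqrt (K * (r - Bs * db) + 3 * db * K * Bs))) :
    3 * K * dh ^ 2 < (r - Bs * db) ^ 2 ∧
    Q ((r - Bs * db) / (3 * dh))
        = 2 * (r - Bs * db) ^ 3 / (27 * dh ^ 2) - K * (r - Bs * db) / 3 - db * K * Bs ∧
    0 < Q ((r - Bs * db) / (3 * dh)) ∧
    0 < Q (((r - Bs * db) + Real.sqrt ((r - Bs * db) ^ 2 - 3 * K * dh ^ 2)) / (3 * dh)) := by
  have ha : 0 < r - Bs * db := sub_pos.2 hpos
  have hkey := sq_mul_lt_of_lt_mul_sqrt_div_sqrt ha (by positivity) hdh.le hdh2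
  have hdisc : 3 * K * dh ^ 2 < (r - Bs * db) ^ 2 :=
    three_mul_sq_lt_sq_of_sq_mul_lt ha (by nlinarith [mul_pos (mul_pos hdb hK) hBs]) hkey
  obtain rfl : Q = cubic dh (r - Bs * db) K (db * K * Bs) := funext hQ
  have hinfl : 0 < cubic dh (r - Bs * db) K (db * K * Bs) ((r - Bs * db) / (3 * dh)) :=
    cubic_inflection_pos hdh (by linarith)
  refine ⟨hdisc, cubic_inflection hdh.ne', hinfl, ?_⟩
  rw [cubic_local_max_eq hdh.ne' (sq_sqrt (by linarith))]
  positivity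

/-- a sufficient condition on `d_h` guaranteeing `Q(H₂^c) > 0`. -/
theorem cubic_local_max_positive (r K db dh Bs : ℝ)
    (hr : 0 < r) (hK : 0 < K) (hdb : 0 < db) (hdh : 0 < dh) (hBs : 0 < Bs)
    (hpos : Bs * db < r)
    (Q : ℝ → ℝ)
    (hQ : ∀ H, Q H = -dh * H ^ 3 + (r - Bs * db) * H ^ 2 - dh * K * H - db * K * Bs)
    (hdh2 : dh < (r - Bs * db) * Real.sqrt (2 * (r - Bs * db))
        / (3 * Real.sqrt (K * (r - Bs * db) + 3 * db * K * Bs))) :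
    3 * K * dh ^ 2 < (r - Bs * db) ^ 2 ∧
    Q ((r - Bs * db) / (3 * dh))
        = 2 * (r - Bs * db) ^ 3 / (27 * dh ^ 2) - K * (r - Bs * db) / 3 - db * K * Bs ∧
    0 < Q ((r - Bs * db) / (3 * dh)) ∧
    0 < Q (((r - Bs * db) + Real.sqrt ((r - Bs * db) ^ 2 - 3 * K * dh ^ 2)) / (3 * dh)) :=
  cubic_local_max_positive_general r K db dh Bs hK hdb hdh hBs hpos Q hQ hdh2
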